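/- Let E be a real normed vector space, m ≥ 1, and for each j ∈ {1,…,m} let f_j : E → ℝ be a nonzero continuous linear functional and c_j ∈ ℝ. Let U = ⋃_{j=1}^m {y ∈ E : f_j(y) ≤ c_j}. Then for every x ∈ E, infDist(x, U) = min_{j ∈ {1,…,m}} max(f_j(x) − c_j, 0) / ‖f_j‖. -/

import Mathlib

lemma infDist_halfspace {E : Type*} [NormedAddCommGroup E] [NormedSpace ℝ E]
    (f : E →L[ℝ] ℝ) (hf : f ≠ 0) (c : ℝ) (x : E) :
    Metric.infDist x {y : E | f y ≤ c} = max (f x - c) 0 / ‖f‖ := by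
  have hN : 0 < ‖f‖ := norm_pos_iff.mpr hf
  obtain ⟨u0, hu0⟩ : ∃ u, f u ≠ 0 := by
    by_contra h; push_neg at h
    exact hf (ContinuousLinearMap.ext fun u => by simp [h u])
  have hne : Set.Nonempty {y : E | f y ≤ c} :=
    ⟨(c / f u0) • u0, by simp [div_mul_cancel₀ c hu0]⟩
  rcases le_or_gt (f x) c with h | h
  · rw [Metric.infDist_zero_of_mem (show x ∈ {y : E | f y ≤ c} from h), max_eq_right (by linarith), zero_div]
  · have ha : 0 < f x - c := by linarith
    rw [max_eq_left ha.le]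
    set a := f x - c with hadef
    apply le_antisymm
    · refine le_of_forall_pos_le_add fun ε hε => ?_
      have hden : 0 < a / ‖f‖ + ε := by positivity
      set τ := a / (a / ‖f‖ + ε) with hτ
      have hτpos : 0 < τ := div_pos ha hden
      have hτlt : τ < ‖f‖ := by
        rw [hτ, div_lt_iff₀ hden]
        have h1 : ‖f‖ * (a / ‖f‖) = a := by field_simp
        nlinarith [mul_pos hN hε]
      obtain ⟨u, hu1, hu2⟩ := f.exists_lt_apply_of_lt_opNorm hτlt
      have hfu : f u ≠ 0 := by
        intro h0; rw [h0] at hu2; simp at hu2; linarith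
      set t := a / f u with ht
      have hmem : x - t • u ∈ {y : E | f y ≤ c} := by
        simp only [Set.mem_setOf_eq, map_sub, map_smul, smul_eq_mul, ht,
          div_mul_cancel₀ a hfu]
        linarith
      have hdist : dist x (x - t • u) ≤ a / ‖f‖ + ε := by
        rw [dist_eq_norm]
        have : x - (x - t • u) = t • u := by abel
        rw [this, norm_smul]
        have h1 : ‖t‖ * ‖u‖ ≤ ‖t‖ := by
          nlinarith [norm_nonneg t, norm_nonneg u, hu1]
        have h2 : ‖t‖ ≤ a / τ := by
          rw [ht, Real.norm_eq_abs, abs_div, abs_of_pos ha]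
          exact div_le_div_of_nonneg_left ha.le hτpos hu2.le
        have h3 : a / τ = a / ‖f‖ + ε := by
          rw [hτ]; field_simp
        linarith
      calc Metric.infDist x {y : E | f y ≤ c} ≤ dist x (x - t • u) :=
            Metric.infDist_le_dist_of_mem hmem
        _ ≤ a / ‖f‖ + ε := hdist
    · rw [← not_lt, Metric.infDist_lt_iff hne]
      rintro ⟨y, hy, hylt⟩
      have h1 : a ≤ f x - f y := by simp only [Set.mem_setOf_eq] at hy; linarith [hy]
      have h2 : f x - f y ≤ ‖f‖ * ‖x - y‖ := by
        calc f x - f y ≤ |f (x - y)| := by rw [map_sub]; exact le_abs_self _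
          _ ≤ ‖f‖ * ‖x - y‖ := f.le_opNorm _
      rw [dist_eq_norm] at hylt
      have := (lt_div_iff₀ hN).mp hylt
      linarith

/-- Let `E` be a real normed vector space, `m ≥ 1`, `f j : E → ℝ` nonzero continuous
linear functionals and `c j ∈ ℝ` for `j < m`, and
`U = ⋃ j, {y : f j y ≤ c j}` a finite union of half-spaces.  Then for every `x`,
`infDist(x, U) = min_j max (f j x - c j) 0 / ‖f j‖`. -/
theorem stmt7 {E : Type*} [NormedAddCommGroup E] [NormedSpace ℝ E]
    (m : ℕ) (hm : 0 < m) (f : Fin m → (E →L[ℝ] ℝ)) (hf : ∀ j, f j ≠ 0)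
    (c : Fin m → ℝ) (x : E) :
    Metric.infDist x (⋃ j, {y : E | f j y ≤ c j})
      = Finset.univ.inf' (Finset.univ_nonempty_iff.mpr (Fin.pos_iff_nonempty.mp hm))
          (fun j => max (f j x - c j) 0 / ‖f j‖) := by
  have key : ∀ j, Metric.infDist x {y : E | f j y ≤ c j}
      = max (f j x - c j) 0 / ‖f j‖ := fun j => infDist_halfspace (f j) (hf j) (c j) x
  have hne : ∀ j : Fin m, Set.Nonempty {y : E | f j y ≤ c j} := by
    intro j
    obtain ⟨u0, hu0⟩ : ∃ u, f j u ≠ 0 := by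
      by_contra h; push_neg at h
      exact hf j (ContinuousLinearMap.ext fun u => by simp [h u])
    exact ⟨(c j / f j u0) • u0, by simp [div_mul_cancel₀ (c j) hu0]⟩
  have hUne : Set.Nonempty (⋃ j, {y : E | f j y ≤ c j}) := by
    obtain ⟨y, hy⟩ := hne ⟨0, hm⟩
    exact ⟨y, Set.mem_iUnion.mpr ⟨⟨0, hm⟩, hy⟩⟩
  set h' := Finset.univ_nonempty_iff.mpr (Fin.pos_iff_nonempty.mp hm)
  apply le_antisymm
  · obtain ⟨j0, -, hj0⟩ := Finset.exists_mem_eq_inf' h'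
      (fun j => max (f j x - c j) 0 / ‖f j‖)
    rw [hj0, ← key j0]
    exact Metric.infDist_le_infDist_of_subset
      (Set.subset_iUnion (fun j => {y : E | f j y ≤ c j}) j0) (hne j0)
  · rw [← not_lt, Metric.infDist_lt_iff hUne]
    rintro ⟨y, hy, hylt⟩
    obtain ⟨j, hyj⟩ := Set.mem_iUnion.mp hy
    have h1 : max (f j x - c j) 0 / ‖f j‖ ≤ dist x y := by
      rw [← key j]
      exact Metric.infDist_le_dist_of_mem hyj
    have h2 := Finset.inf'_le (fun j => max (f j x - c j) 0 / ‖f j‖)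
      (Finset.mem_univ j)
    linarith
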